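/- Let K be a symmetric 3×3 matrix, R, R̄ ∈ SO(3) with Ṙ = RΩ̂ and (d/dt)R̄ = R̄(Ω + γ̃ + k_R e_H)^. Define ê_H = R̄ᵀKR - RᵀKR̄. Then ė_H = -(tr(R̄ᵀKR)I - R̄ᵀKR)(γ̃ + k_R e_H) + ê_H Ω. -/

import Mathlib

/-!
With `A = R̄ᵀ K R`, symmetry of `K` gives `ê_H = A - Aᵀ`, and the two kinematic equations give
`Ȧ = -(Ω + w)^ A + A Ω̂` with `w = γ̃ + k_R e_H`. Splitting off `w`, the derivative of `A - Aᵀ` is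
`-(ŵ A + Aᵀ ŵ) + (ê_H Ω̂ - Ω̂ ê_H)`. The first bracket is `((tr A • 1 - A) w)^`, and the commutator
of two hat matrices is the hat of the cross product `ê_H Ω`.
-/

open Matrix

noncomputable section

def hat (x : Fin 3 → ℝ) : Matrix (Fin 3) (Fin 3) ℝ :=
  !![0, -x 2, x 1; x 2, 0, -x 0; -x 1, x 0, 0]

def vee (M : Matrix (Fin 3) (Fin 3) ℝ) : Fin 3 → ℝ :=
  ![M 2 1, M 0 2, M 1 0]

def SO3 (R : Matrix (Fin 3) (Fin 3) ℝ) : Prop :=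
  Rᵀ * R = 1 ∧ R.det = 1

attribute [local instance] Matrix.linftyOpNormedAddCommGroup Matrix.linftyOpNormedSpace
attribute [local instance] Matrix.linftyOpNormedRing Matrix.linftyOpNormedAlgebra

lemma transpose_transpose_mul_mul {α m n : Type*} [CommSemiring α] [Fintype m]
    (P : Matrix m n α) (K : Matrix m m α) (Q : Matrix m n α)
    (hK : Kᵀ = K) : (Pᵀ * K * Q)ᵀ = Qᵀ * K * P := by
  rw [transpose_mul, transpose_mul, transpose_transpose, hK, Matrix.mul_assoc]

theorem HasDerivAt.matrix_transpose {𝕜 m n : Type*} [NontriviallyNormedField 𝕜] [CompleteSpace 𝕜]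
    [Fintype m] [Fintype n] {A : 𝕜 → Matrix m n 𝕜} {A' : Matrix m n 𝕜} {t : 𝕜}
    (h : HasDerivAt A A' t) : HasDerivAt (fun s => (A s)ᵀ) A'ᵀ t :=
  (transposeLinearEquiv m n 𝕜 𝕜).toLinearMap.toContinuousLinearMap.hasFDerivAt.comp_hasDerivAt t h

lemma hat_add (x y : Fin 3 → ℝ) : hat (x + y) = hat x + hat y := by
  ext i j
  fin_cases i <;> fin_cases j <;> simp [hat] <;> ring

lemma hat_neg (x : Fin 3 → ℝ) : hat (-x) = -hat x := by
  ext i j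
  fin_cases i <;> fin_cases j <;> simp [hat]

lemma hat_transpose (x : Fin 3 → ℝ) : (hat x)ᵀ = -hat x := by
  ext i j
  fin_cases i <;> fin_cases j <;> simp [hat]

lemma vee_hat (x : Fin 3 → ℝ) : vee (hat x) = x := by
  ext i
  fin_cases i <;> simp [vee, hat]

lemma hat_vee_sub_transpose (A : Matrix (Fin 3) (Fin 3) ℝ) : hat (vee (A - Aᵀ)) = A - Aᵀ := by
  ext i j
  fin_cases i <;> fin_cases j <;> simp [hat, vee]

lemma hat_mul_add_transpose_mul_hat (x : Fin 3 → ℝ) (A : Matrix (Fin 3) (Fin 3) ℝ) :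
    hat x * A + Aᵀ * hat x = hat ((A.trace • (1 : Matrix (Fin 3) (Fin 3) ℝ) - A) *ᵥ x) := by
  ext i j
  fin_cases i <;> fin_cases j <;>
    simp [hat, mul_apply, mulVec, vecMul, dotProduct, Fin.sum_univ_succ, trace, one_apply] <;> ring

lemma hat_mul_hat_sub_hat_mul_hat (x y : Fin 3 → ℝ) :
    hat x * hat y - hat y * hat x = hat (hat x *ᵥ y) := by
  ext i j
  fin_cases i <;> fin_cases j <;>
    simp [hat, mulVec, dotProduct, Fin.sum_univ_succ] <;> ring

lemma skew_part_of_kinematics (A : Matrix (Fin 3) (Fin 3) ℝ) (Ω w : Fin 3 → ℝ) :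
    (-(hat (Ω + w) * A) + A * hat Ω) - (-(hat (Ω + w) * A) + A * hat Ω)ᵀ
      = hat (-((A.trace • (1 : Matrix (Fin 3) (Fin 3) ℝ) - A) *ᵥ w)
          + hat (vee (A - Aᵀ)) *ᵥ Ω) := by
  have hsplit : (-(hat (Ω + w) * A) + A * hat Ω) - (-(hat (Ω + w) * A) + A * hat Ω)ᵀ
      = -(hat w * A + Aᵀ * hat w) + ((A - Aᵀ) * hat Ω - hat Ω * (A - Aᵀ)) := by
    simp only [transpose_add, transpose_neg, transpose_mul, hat_transpose, hat_add]
    noncomm_ring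
  rw [hsplit, hat_mul_add_transpose_mul_hat, hat_add, hat_neg, ← hat_mul_hat_sub_hat_mul_hat,
    hat_vee_sub_transpose]

def veeLinearMap : Matrix (Fin 3) (Fin 3) ℝ →ₗ[ℝ] (Fin 3 → ℝ) where
  toFun := vee
  map_add' M N := by ext i; fin_cases i <;> rfl
  map_smul' c M := by ext i; fin_cases i <;> rfl

theorem HasDerivAt.vee {M : ℝ → Matrix (Fin 3) (Fin 3) ℝ} {M' : Matrix (Fin 3) (Fin 3) ℝ} {t : ℝ}
    (h : HasDerivAt M M' t) : HasDerivAt (fun s => vee (M s)) (vee M') t :=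
  veeLinearMap.toContinuousLinearMap.hasFDerivAt.comp_hasDerivAt t h

theorem hasDerivAt_transpose_mul_mul {R Rbar : ℝ → Matrix (Fin 3) (Fin 3) ℝ} {ω ωbar : Fin 3 → ℝ}
    (K : Matrix (Fin 3) (Fin 3) ℝ) {t : ℝ} (hR : HasDerivAt R (R t * hat ω) t)
    (hRbar : HasDerivAt Rbar (Rbar t * hat ωbar) t) :
    HasDerivAt (fun s => (Rbar s)ᵀ * K * R s)
      (-(hat ωbar * ((Rbar t)ᵀ * K * R t)) + (Rbar t)ᵀ * K * R t * hat ω) t := by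
  refine ((hRbar.matrix_transpose.mul_const K).fun_mul hR).congr_deriv ?_
  simp only [transpose_mul, hat_transpose]
  noncomm_ring

theorem deriv_eH_general (K : Matrix (Fin 3) (Fin 3) ℝ) (hK : Kᵀ = K)
    (R Rbar : ℝ → Matrix (Fin 3) (Fin 3) ℝ) (Ω γtil : ℝ → Fin 3 → ℝ) (kR : ℝ)
    (eH : ℝ → Fin 3 → ℝ)
    (heH : ∀ t, eH t = vee ((Rbar t)ᵀ * K * R t - (R t)ᵀ * K * Rbar t))
    (hRdyn : ∀ t, HasDerivAt R (R t * hat (Ω t)) t)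
    (hRbardyn : ∀ t, HasDerivAt Rbar (Rbar t * hat (Ω t + γtil t + kR • eH t)) t)
    (t : ℝ) :
    HasDerivAt eH
      (-((((Rbar t)ᵀ * K * R t).trace • (1 : Matrix (Fin 3) (Fin 3) ℝ)
            - (Rbar t)ᵀ * K * R t).mulVec (γtil t + kR • eH t))
        + (hat (eH t)).mulVec (Ω t)) t := by
  have hA := hasDerivAt_transpose_mul_mul K (hRdyn t) (add_assoc (Ω t) _ _ ▸ hRbardyn t)
  have heH_skew : eH = fun s => vee ((Rbar s)ᵀ * K * R s - ((Rbar s)ᵀ * K * R s)ᵀ) := by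
    ext1 s
    rw [heH, transpose_transpose_mul_mul _ _ _ hK]
  have hskew := (hA.fun_sub hA.matrix_transpose).vee
  rw [skew_part_of_kinematics, vee_hat, ← heH_skew, transpose_transpose_mul_mul _ _ _ hK, ← heH]
    at hskew
  exact hskew

theorem deriv_eH (K : Matrix (Fin 3) (Fin 3) ℝ) (hK : Kᵀ = K)
    (R Rbar : ℝ → Matrix (Fin 3) (Fin 3) ℝ) (Ω γtil : ℝ → Fin 3 → ℝ) (kR : ℝ)
    (eH : ℝ → Fin 3 → ℝ)
    (heH : ∀ t, eH t = vee ((Rbar t)ᵀ * K * R t - (R t)ᵀ * K * Rbar t))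
    (hRdyn : ∀ t, HasDerivAt R (R t * hat (Ω t)) t)
    (hRbardyn : ∀ t, HasDerivAt Rbar (Rbar t * hat (Ω t + γtil t + kR • eH t)) t)
    (hR : ∀ t, SO3 (R t)) (hRbar : ∀ t, SO3 (Rbar t)) (t : ℝ) :
    HasDerivAt eH
      (-((((Rbar t)ᵀ * K * R t).trace • (1 : Matrix (Fin 3) (Fin 3) ℝ)
            - (Rbar t)ᵀ * K * R t).mulVec (γtil t + kR • eH t))
        + (hat (eH t)).mulVec (Ω t)) t :=
  deriv_eH_general K hK R Rbar Ω γtil kR eH heH hRdyn hRbardyn t
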